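/- Let p be a prime and let G be a group that is residually a finite p-group. Then for every finite normal subgroup N of G, the quotient group G/N is residually a finite p-group. -/

import Mathlib

/-!
Given `a ∉ N`, the elements `a * n⁻¹` with `n ∈ N` are finitely many and nontrivial, so the
product of homomorphisms separating them has a kernel `K` with `G ⧸ K` a finite `p`-group
avoiding all of them. Then `a ∉ K ⊔ N`, and `G ⧸ (K ⊔ N)` is a finite `p`-group quotient of
`G ⧸ N` in which the image of `a` survives.
-/

/-- `G` is residually a finite `p`-group: for every non-identity `a ∈ G` there exists
a surjective homomorphism `φ` of `G` onto some finite `p`-group `X` with `φ a ≠ 1`. -/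
def IsResiduallyFpGroup (p : ℕ) (G : Type) [Group G] : Prop :=
  ∀ a : G, a ≠ 1 →
    ∃ (X : Type) (_ : Group X) (_ : Fintype X),
      IsPGroup p X ∧
      ∃ φ : G →* X, Function.Surjective φ ∧ φ a ≠ 1

section

variable {p : ℕ} {G : Type*} [Group G]

theorem IsPGroup.pi {ι : Type*} [Finite ι] {X : ι → Type*} [∀ i, Group (X i)]
    (hX : ∀ i, IsPGroup p (X i)) : IsPGroup p (∀ i, X i) := by
  intro g
  choose k hk using fun i => hX i (g i)
  have := Fintype.ofFinite ι
  refine ⟨Finset.univ.sup k, funext fun i => ?_⟩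
  obtain ⟨c, hc⟩ := pow_dvd_pow p (Finset.le_sup (Finset.mem_univ i) : k i ≤ Finset.univ.sup k)
  rw [Pi.pow_apply, hc, pow_mul, hk, one_pow, Pi.one_apply]

theorem IsPGroup.quotient_of_le {K L : Subgroup G} [K.Normal] [L.Normal] (hKL : K ≤ L)
    (hK : IsPGroup p (G ⧸ K)) : IsPGroup p (G ⧸ L) :=
  hK.of_surjective (QuotientGroup.map K L (MonoidHom.id G) hKL) <|
    QuotientGroup.map_surjective_of_surjective _ _ _ QuotientGroup.mk_surjective _

theorem Subgroup.notMem_sup_of_mul_inv_notMem {K N : Subgroup G} [N.Normal] {a : G}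
    (h : ∀ n ∈ N, a * n⁻¹ ∉ K) : a ∉ K ⊔ N := by
  rw [Subgroup.mem_sup_of_normal_right]
  rintro ⟨k, hk, n, hn, rfl⟩
  exact h n hn (by simpa using hk)

end

section

variable {p : ℕ} {G : Type} [Group G]

theorem IsResiduallyFpGroup.exists_finiteIndex_normal_disjoint (h : IsResiduallyFpGroup p G)
    {S : Set G} (hS : S.Finite) (hS1 : 1 ∉ S) :
    ∃ (K : Subgroup G) (_ : K.Normal), K.FiniteIndex ∧ IsPGroup p (G ⧸ K) ∧
      Disjoint (K : Set G) S := by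
  have := hS.to_subtype
  choose X _ _ hX φ _ hφ using fun s : S => h s (ne_of_mem_of_not_mem s.2 hS1)
  let Φ := MonoidHom.pi φ
  refine ⟨Φ.ker, inferInstance, inferInstance,
    ((IsPGroup.pi hX).to_subgroup Φ.range).of_equiv (QuotientGroup.quotientKerEquivRange Φ).symm,
    Set.disjoint_left.2 fun s hsK hsS => hφ ⟨s, hsS⟩ ?_⟩
  exact congrFun (MonoidHom.mem_ker.1 hsK) ⟨s, hsS⟩

theorem isResiduallyFpGroup_quotient_of_forall_notMem {N : Subgroup G} [N.Normal]
    (h : ∀ a ∉ N, ∃ (L : Subgroup G) (_ : L.Normal), N ≤ L ∧ a ∉ L ∧ L.FiniteIndex ∧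
      IsPGroup p (G ⧸ L)) :
    IsResiduallyFpGroup p (G ⧸ N) := by
  intro a' ha'
  obtain ⟨a, rfl⟩ := QuotientGroup.mk_surjective a'
  obtain ⟨L, _, hNL, haL, _, hL⟩ := h a (mt (QuotientGroup.eq_one_iff a).2 ha')
  refine ⟨G ⧸ L, inferInstance, Subgroup.fintypeQuotientOfFiniteIndex, hL,
    QuotientGroup.map N L (MonoidHom.id G) hNL,
    QuotientGroup.map_surjective_of_surjective _ _ _ QuotientGroup.mk_surjective _, ?_⟩
  exact mt (QuotientGroup.eq_one_iff a).1 haL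

end

theorem quotient_residuallyFp_of_finite_normal_general
    (p : ℕ) (G : Type) [Group G] (h : IsResiduallyFpGroup p G)
    (N : Subgroup G) [N.Normal] (hN : Finite N) :
    IsResiduallyFpGroup p (G ⧸ N) := by
  refine isResiduallyFpGroup_quotient_of_forall_notMem fun a haN => ?_
  have hS1 : (1 : G) ∉ Set.range fun n : N => a * (n : G)⁻¹ := by
    rintro ⟨n, hn⟩
    exact haN (mul_inv_eq_one.1 hn ▸ n.2)
  obtain ⟨K, _, _, hK, hKS⟩ := h.exists_finiteIndex_normal_disjoint (Set.finite_range _) hS1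
  refine ⟨K ⊔ N, inferInstance, le_sup_right, ?_, Subgroup.finiteIndex_of_le le_sup_left,
    hK.quotient_of_le le_sup_left⟩
  exact Subgroup.notMem_sup_of_mul_inv_notMem fun n hn hnK =>
    Set.disjoint_left.1 hKS hnK ⟨⟨n, hn⟩, rfl⟩

/-- Let `p` be a prime and `G` a group that is residually a finite `p`-group. Then for
every finite normal subgroup `N` of `G`, the quotient `G ⧸ N` is residually a finite
`p`-group. -/
theorem quotient_residuallyFp_of_finite_normal
    (p : ℕ) (hp : p.Prime) (G : Type) [Group G] (h : IsResiduallyFpGroup p G)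
    (N : Subgroup G) [N.Normal] (hN : Finite N) :
    IsResiduallyFpGroup p (G ⧸ N) :=
  quotient_residuallyFp_of_finite_normal_general p G h N hN
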